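/- Let Γ₁, Γ₂ be groups together with injective homomorphisms ι₁ : Σ → Γ₁ and ι₂ : Σ → Γ₂ from a group Σ, and let Γ = Γ₁ *_Σ Γ₂ be the amalgamated free product; identify Γ₁, Γ₂ and Σ with their images in Γ. Let λ be the left translation representation of Γ on the real Hilbert space ℓ²_ℝ(Γ/Σ). Then there exists a unique 1-cocycle b : Γ → ℓ²_ℝ(Γ/Σ) for λ (i.e. b(gh) = b(g) + λ(g)b(h) for all g, h ∈ Γ) satisfying b(g) = 0 for all g ∈ Γ₁ and b(h) = δ_{Σ} − δ_{hΣ} for all h ∈ Γ₂, where δ_{xΣ} is the indicator function of the coset xΣ and δ_{Σ} that of the trivial coset. -/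

import Mathlib

open scoped RealInnerProductSpace Classical

noncomputable section

universe u

/-- The two-element family of groups `Γ₁, Γ₂`, indexed by `Bool`. -/
def AmalgFam (G₁ G₂ : Type u) : Bool → Type u
  | true => G₁
  | false => G₂

instance AmalgFam.instGroup {G₁ G₂ : Type u} [Group G₁] [Group G₂] :
    ∀ i, Group (AmalgFam G₁ G₂ i)
  | true => inferInstanceAs (Group G₁)
  | false => inferInstanceAs (Group G₂)

variable {K G₁ G₂ : Type u} [Group K] [Group G₁] [Group G₂]

/-- The pair of maps `ι₁ : K → Γ₁`, `ι₂ : K → Γ₂` as a family indexed by `Bool`. -/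
def amalgMaps (ι₁ : K →* G₁) (ι₂ : K →* G₂) : ∀ i, K →* AmalgFam G₁ G₂ i
  | true => ι₁
  | false => ι₂

/-- The amalgamated free product `Γ₁ *_K Γ₂`, as the pushout of `ι₁` and `ι₂`. -/
abbrev Amalg (ι₁ : K →* G₁) (ι₂ : K →* G₂) : Type u :=
  Monoid.PushoutI (amalgMaps ι₁ ι₂)

/-- The canonical map `Γ₁ → Γ₁ *_K Γ₂`. -/
abbrev Amalg.inl (ι₁ : K →* G₁) (ι₂ : K →* G₂) : G₁ →* Amalg ι₁ ι₂ :=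
  Monoid.PushoutI.of (φ := amalgMaps ι₁ ι₂) true

/-- The canonical map `Γ₂ → Γ₁ *_K Γ₂`. -/
abbrev Amalg.inr (ι₁ : K →* G₁) (ι₂ : K →* G₂) : G₂ →* Amalg ι₁ ι₂ :=
  Monoid.PushoutI.of (φ := amalgMaps ι₁ ι₂) false

/-- The copy of `Σ = K` inside `Γ₁ *_K Γ₂`. -/
abbrev Amalg.sigma (ι₁ : K →* G₁) (ι₂ : K →* G₂) : Subgroup (Amalg ι₁ ι₂) :=
  (Monoid.PushoutI.base (amalgMaps ι₁ ι₂)).range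

/-- The coset space `Γ/Σ`. -/
abbrev Amalg.coset (ι₁ : K →* G₁) (ι₂ : K →* G₂) : Type u :=
  Amalg ι₁ ι₂ ⧸ Amalg.sigma ι₁ ι₂

/-- The real Hilbert space `ℓ²_ℝ(Γ/Σ)`. -/
abbrev Amalg.l2 (ι₁ : K →* G₁) (ι₂ : K →* G₂) : Type u :=
  lp (fun _ : Amalg.coset ι₁ ι₂ => ℝ) 2

section Aux

variable (ι₁ : K →* G₁) (ι₂ : K →* G₂)
variable (lam : Amalg ι₁ ι₂ →* (Amalg.l2 ι₁ ι₂ ≃ₗᵢ[ℝ] Amalg.l2 ι₁ ι₂))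

/-- The action of `Γ` on `Multiplicative ℓ²(Γ/Σ)` induced by `lam`. -/
def amalgActEquiv (g : Amalg ι₁ ι₂) :
    Multiplicative (Amalg.l2 ι₁ ι₂) ≃* Multiplicative (Amalg.l2 ι₁ ι₂) where
  toFun x := .ofAdd (lam g x.toAdd)
  invFun x := .ofAdd ((lam g).symm x.toAdd)
  left_inv x := by simp
  right_inv x := by simp
  map_mul' x y := by
    simp [← ofAdd_add, map_add]

def amalgAct : Amalg ι₁ ι₂ →* MulAut (Multiplicative (Amalg.l2 ι₁ ι₂)) where
  toFun g := amalgActEquiv ι₁ ι₂ lam g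
  map_one' := by
    ext x
    simp [amalgActEquiv]
  map_mul' g h := by
    ext x
    simp [amalgActEquiv]

/-- The semidirect product `ℓ² ⋊ Γ`. -/
abbrev AmalgH : Type u :=
  SemidirectProduct (Multiplicative (Amalg.l2 ι₁ ι₂)) (Amalg ι₁ ι₂) (amalgAct ι₁ ι₂ lam)

/-- Any cocycle gives a homomorphism into the semidirect product. -/
def cocycleHom (c : Amalg ι₁ ι₂ → Amalg.l2 ι₁ ι₂)
    (hc : ∀ g h, c (g * h) = c g + lam g (c h)) :
    Amalg ι₁ ι₂ →* AmalgH ι₁ ι₂ lam where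
  toFun g := ⟨.ofAdd (c g), g⟩
  map_one' := by
    have h1 : c 1 = 0 := by
      have := hc 1 1
      rw [one_mul, map_one lam] at this
      simpa using this.symm
    ext <;> simp [h1]
  map_mul' g h := by
    apply SemidirectProduct.ext
    · show Multiplicative.ofAdd (c (g * h)) =
        Multiplicative.ofAdd (c g) * Multiplicative.ofAdd (lam g (c h))
      rw [hc]
      rfl
    · rfl

theorem lam_single
    (hlam : ∀ (g : Amalg ι₁ ι₂) (ξ : Amalg.l2 ι₁ ι₂) (x : Amalg.coset ι₁ ι₂),
      (lam g ξ) x = ξ (g⁻¹ • x))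
    (g : Amalg ι₁ ι₂) (q : Amalg.coset ι₁ ι₂) :
    lam g (lp.single 2 q 1) = lp.single 2 (g • q) 1 := by
  apply lp.ext
  funext x
  rw [hlam]
  rcases eq_or_ne x (g • q) with rfl | hx
  · have : g⁻¹ • (g • q) = q := inv_smul_smul g q
    rw [this]
    exact (lp.single_apply_self (E := fun _ : Amalg.coset ι₁ ι₂ => ℝ) 2 q 1).trans
      (lp.single_apply_self (E := fun _ : Amalg.coset ι₁ ι₂ => ℝ) 2 (g • q) 1).symm
  · rw [lp.single_apply_ne 2 q 1 (fun h => hx (by rw [← h, smul_inv_smul])),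
      lp.single_apply_ne 2 (g • q) 1 hx]

/-- `δ_Σ - δ_{gΣ}`. -/
def amalgBeta (g : Amalg ι₁ ι₂) : Amalg.l2 ι₁ ι₂ :=
  lp.single 2 (QuotientGroup.mk (1 : Amalg ι₁ ι₂)) 1 -
    lp.single 2 (QuotientGroup.mk g) 1

theorem amalgBeta_cocycle
    (hlam : ∀ (g : Amalg ι₁ ι₂) (ξ : Amalg.l2 ι₁ ι₂) (x : Amalg.coset ι₁ ι₂),
      (lam g ξ) x = ξ (g⁻¹ • x))
    (g h : Amalg ι₁ ι₂) :
    amalgBeta ι₁ ι₂ (g * h) = amalgBeta ι₁ ι₂ g + lam g (amalgBeta ι₁ ι₂ h) := by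
  unfold amalgBeta
  rw [map_sub, lam_single ι₁ ι₂ lam hlam, lam_single ι₁ ι₂ lam hlam]
  have h1 : g • (QuotientGroup.mk (1 : Amalg ι₁ ι₂) : Amalg.coset ι₁ ι₂) =
      QuotientGroup.mk g := by
    show QuotientGroup.mk (g * 1) = _
    rw [mul_one]
  have h2 : g • (QuotientGroup.mk h : Amalg.coset ι₁ ι₂) = QuotientGroup.mk (g * h) := rfl
  rw [h1, h2]
  abel

theorem amalgBeta_base
    (k : K) : amalgBeta ι₁ ι₂ (Monoid.PushoutI.base (amalgMaps ι₁ ι₂) k) = 0 := by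
  unfold amalgBeta
  have : (QuotientGroup.mk (Monoid.PushoutI.base (amalgMaps ι₁ ι₂) k) : Amalg.coset ι₁ ι₂) =
      QuotientGroup.mk (1 : Amalg ι₁ ι₂) := by
    rw [QuotientGroup.eq]
    exact ⟨k⁻¹, by rw [map_inv, mul_one]⟩
  rw [this, sub_self]

end Aux

/-- for the amalgamated free product `Γ = Γ₁ *_Σ Γ₂` there is a unique
1-cocycle `b` for the left translation representation on `ℓ²_ℝ(Γ/Σ)` with `b(g) = 0`
for `g ∈ Γ₁` and `b(h) = δ_Σ - δ_{hΣ}` for `h ∈ Γ₂`. -/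
theorem statement13 (ι₁ : K →* G₁) (ι₂ : K →* G₂)
    (hι₁ : Function.Injective ι₁) (hι₂ : Function.Injective ι₂)
    (lam : Amalg ι₁ ι₂ →* (Amalg.l2 ι₁ ι₂ ≃ₗᵢ[ℝ] Amalg.l2 ι₁ ι₂))
    (hlam : ∀ (g : Amalg ι₁ ι₂) (ξ : Amalg.l2 ι₁ ι₂) (x : Amalg.coset ι₁ ι₂),
      (lam g ξ) x = ξ (g⁻¹ • x)) :
    ∃! b : Amalg ι₁ ι₂ → Amalg.l2 ι₁ ι₂,
      (∀ g h : Amalg ι₁ ι₂, b (g * h) = b g + lam g (b h)) ∧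
      (∀ g : G₁, b (Amalg.inl ι₁ ι₂ g) = 0) ∧
      (∀ h : G₂, b (Amalg.inr ι₁ ι₂ h) =
        lp.single 2 (QuotientGroup.mk (1 : Amalg ι₁ ι₂)) 1 -
          lp.single 2 (QuotientGroup.mk (Amalg.inr ι₁ ι₂ h)) 1) := by
  classical
  set Gam := Amalg ι₁ ι₂
  let fT : G₁ →* AmalgH ι₁ ι₂ lam := SemidirectProduct.inr.comp (Amalg.inl ι₁ ι₂)
  let fF : G₂ →* AmalgH ι₁ ι₂ lam :=
    (cocycleHom ι₁ ι₂ lam (amalgBeta ι₁ ι₂)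
      (amalgBeta_cocycle ι₁ ι₂ lam hlam)).comp (Amalg.inr ι₁ ι₂)
  let f : ∀ i, AmalgFam G₁ G₂ i →* AmalgH ι₁ ι₂ lam := fun i =>
    match i with
    | true => fT
    | false => fF
  have hf : ∀ i, (f i).comp (amalgMaps ι₁ ι₂ i) = fT.comp ι₁ := by
    intro i
    cases i
    · -- false
      apply MonoidHom.ext
      intro k
      apply SemidirectProduct.ext
      · show Multiplicative.ofAdd (amalgBeta ι₁ ι₂ (Amalg.inr ι₁ ι₂ (ι₂ k))) = _
        have : Amalg.inr ι₁ ι₂ (ι₂ k) = Monoid.PushoutI.base (amalgMaps ι₁ ι₂) k :=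
          Monoid.PushoutI.of_apply_eq_base (amalgMaps ι₁ ι₂) false k
        rw [this, amalgBeta_base]
        rfl
      · show Amalg.inr ι₁ ι₂ (ι₂ k) = Amalg.inl ι₁ ι₂ (ι₁ k)
        have e1 : Amalg.inr ι₁ ι₂ (ι₂ k) = Monoid.PushoutI.base (amalgMaps ι₁ ι₂) k :=
          Monoid.PushoutI.of_apply_eq_base (amalgMaps ι₁ ι₂) false k
        have e2 : Amalg.inl ι₁ ι₂ (ι₁ k) = Monoid.PushoutI.base (amalgMaps ι₁ ι₂) k :=
          Monoid.PushoutI.of_apply_eq_base (amalgMaps ι₁ ι₂) true k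
        rw [e1, e2]
    · rfl
  let F : Gam →* AmalgH ι₁ ι₂ lam := Monoid.PushoutI.lift f (fT.comp ι₁) hf
  have hright : ∀ g : Gam, (F g).right = g := by
    have h : SemidirectProduct.rightHom.comp F = MonoidHom.id Gam := by
      apply Monoid.PushoutI.hom_ext_nonempty
      intro i
      cases i <;>
      · apply MonoidHom.ext
        intro g
        show SemidirectProduct.rightHom (F (Monoid.PushoutI.of _ g)) = _
        simp only [F, Monoid.PushoutI.lift_of]
        rfl
    intro g
    exact DFunLike.congr_fun h g
  let b : Gam → Amalg.l2 ι₁ ι₂ := fun g => Multiplicative.toAdd (F g).left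
  have hbc : ∀ g h : Gam, b (g * h) = b g + lam g (b h) := by
    intro g h
    show Multiplicative.toAdd (F (g * h)).left = _
    rw [map_mul, SemidirectProduct.mul_left]
    show Multiplicative.toAdd ((F g).left *
      Multiplicative.ofAdd (lam (F g).right (Multiplicative.toAdd (F h).left))) = _
    rw [hright g, toAdd_mul, toAdd_ofAdd]
  have hb1 : ∀ g : G₁, b (Amalg.inl ι₁ ι₂ g) = 0 := by
    intro g
    show Multiplicative.toAdd (F (Monoid.PushoutI.of true g)).left = 0
    simp only [F, Monoid.PushoutI.lift_of]
    rfl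
  have hb2 : ∀ h : G₂, b (Amalg.inr ι₁ ι₂ h) = amalgBeta ι₁ ι₂ (Amalg.inr ι₁ ι₂ h) := by
    intro h
    show Multiplicative.toAdd (F (Monoid.PushoutI.of false h)).left = _
    simp only [F, Monoid.PushoutI.lift_of]
    rfl
  refine ⟨b, ⟨hbc, hb1, hb2⟩, ?_⟩
  rintro b' ⟨hc', h1', h2'⟩
  have hΦ : cocycleHom ι₁ ι₂ lam b' hc' = cocycleHom ι₁ ι₂ lam b hbc := by
    apply Monoid.PushoutI.hom_ext_nonempty
    intro i
    cases i
    · apply MonoidHom.ext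
      intro g
      apply SemidirectProduct.ext
      · show Multiplicative.ofAdd (b' (Amalg.inr ι₁ ι₂ g)) =
          Multiplicative.ofAdd (b (Amalg.inr ι₁ ι₂ g))
        rw [h2' g, hb2 g]
        rfl
      · rfl
    · apply MonoidHom.ext
      intro g
      apply SemidirectProduct.ext
      · show Multiplicative.ofAdd (b' (Amalg.inl ι₁ ι₂ g)) =
          Multiplicative.ofAdd (b (Amalg.inl ι₁ ι₂ g))
        rw [h1' g, hb1 g]
      · rfl
  funext g
  have := DFunLike.congr_fun hΦ g
  have hl := congrArg SemidirectProduct.left this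
  exact congrArg Multiplicative.toAdd hl
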